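/- arXiv:1607.04719 — 7 statements merged into one kernel-verified Lean document; each statement's English description precedes it below -/
import Mathlib

section
/- Let n ≥ 7 be an integer and let p be a real number with (n+6)/(n−6) < p and, in the case n ≥ 15, additionally p < p_c(n). Set k = 6/(p−1) and define k₀ = k(k+2)(k+4)(n−2−k)(n−4−k)(n−6−k), k₁ = k(k+2−n)(k+4)(k+6−n) + (k+2)(k+4−n)(k+4)(k+6−n) + k(k+2−n)(k+2)(k+4−n), k₂ = (k+4)(n−k−6) + k(n−k−2) + (k+2)(n−k−4), and c₀ = (k+6)·k₀/k − (n−6)²(n−2)²(n+2)²/64, c₁ = (k+6)·k₁ − k·(n−6)(n+2)(3n²−12n−4)/16, c₂ = (k+6)·k₂ − k·(3n²−12n−20)/4. Then c₀ > 0, c₁ > 0 and c₂ > 0. -/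
open MeasureTheory Filter

noncomputable section

def dd1 (n : ℝ) : ℝ :=
  -108*n^6 + 1296*n^5 - 3024*n^4 - 10368*n^3 + 103104*n^2 + 20736*n - 94976

def dd2 (n : ℝ) : ℝ :=
  9*n^12 - 216*n^11 + 1800*n^10 - 4320*n^9 - 30864*n^8 + 251136*n^7 - 690432*n^6
    - 1936384*n^5 + 6915840*n^4 + 4818944*n^3 - 16644096*n^2 - 3039232*n + 6131712

/-- `d₀(n)`, the real cube root of `-(d₁(n) + 36√(d₂(n)))`. -/
def dd0 (n : ℝ) : ℝ := (-(dd1 n + 36 * Real.sqrt (dd2 n))) ^ ((1 : ℝ)/3)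

def dfn (n : ℝ) : ℝ :=
  (1/6) * Real.sqrt (9*n^2 + 96 - (1536 + 1152*n^2) / dd0 n - (3/2) * dd0 n)

/-- The Joseph–Lundgren exponent `p_c(n)` (for `n ≥ 15`; `p_c(n) = +∞` for `n ≤ 14`,
which is encoded by imposing the bound `p < pc n` only when `15 ≤ n`). -/
def pc (n : ℝ) : ℝ := (n + 4 - 2 * dfn n) / (n - 8 - 2 * dfn n)

/-! ### Auxiliary lemmas -/

private lemma aux_d2pos (N : ℝ) (h : 15 ≤ N) : 0 < dd2 N := by
  have hm : (0:ℝ) ≤ N - 15 := by linarith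
  have hd2e : dd2 N = 9*(N-15)^12 + 1404*(N-15)^11 + 99810*(N-15)^10 + 4275180*(N-15)^9
      + 122860311*(N-15)^8 + 2494830456*(N-15)^7 + 36687653148*(N-15)^6
      + 393377921336*(N-15)^5 + 3048957353415*(N-15)^4 + 16630573432844*(N-15)^3
      + 60426347513634*(N-15)^2 + 130684714202588*(N-15) + 126100750123257 := by
    simp only [dd2]; ring
  rw [hd2e]
  have h2 := pow_nonneg hm 2
  have h3 := pow_nonneg hm 3
  have h4 := pow_nonneg hm 4
  have h5 := pow_nonneg hm 5
  have h6 := pow_nonneg hm 6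
  have h7 := pow_nonneg hm 7
  have h8 := pow_nonneg hm 8
  have h9 := pow_nonneg hm 9
  have h10 := pow_nonneg hm 10
  have h11 := pow_nonneg hm 11
  have h12 := pow_nonneg hm 12
  linarith

private lemma aux_d1neg (N : ℝ) (h : 15 ≤ N) : dd1 N < 0 := by
  have hm : (0:ℝ) ≤ N - 15 := by linarith
  have hd1e : -dd1 N = 108*(N-15)^6 + 8424*(N-15)^5 + 270324*(N-15)^4 + 4565808*(N-15)^3
      + 42718356*(N-15)^2 + 208733544*(N-15) + 410705036 := by
    simp only [dd1]; ring
  have h2 := pow_nonneg hm 2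
  have h3 := pow_nonneg hm 3
  have h4 := pow_nonneg hm 4
  have h5 := pow_nonneg hm 5
  have h6 := pow_nonneg hm 6
  linarith

private lemma aux_T (N T : ℝ) (h15 : 15 ≤ N) (hT0 : 0 ≤ T) (hT2 : T^2 = dd2 N) :
    36*T < -dd1 N := by
  have hq : (dd1 N)^2 - 1296*(dd2 N) = 452984832*N^6 + 1811939328*N^4
      + 2415919104*N^2 + 1073741824 := by
    simp only [dd1, dd2]; ring
  have hqpos : 0 < (dd1 N)^2 - 1296*(dd2 N) := by rw [hq]; positivity
  have hd1neg := aux_d1neg N h15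
  nlinarith [hT2, hT0, hd1neg, hqpos]

set_option maxHeartbeats 1000000 in
private lemma aux_Fx0 (N E T x0 : ℝ) (hEpos : 0 < E)
    (hE3 : E^3 = -(dd1 N + 36*T)) (hT2 : T^2 = dd2 N)
    (hx0E : x0 * (36*E) = (9*N^2+96)*E - (1536+1152*N^2) - (3/2)*E^2) :
    ((N-4)^2/4 - x0)*(N^2/4 - x0)*((N+4)^2/4 - x0) = (N-6)^2*(N-2)^2*(N+2)^2/64 := by
  have key : ((N-4)^2/4 - x0)*(N^2/4 - x0)*((N+4)^2/4 - x0)*(36*E)^3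
      = (N-6)^2*(N-2)^2*(N+2)^2/64*(36*E)^3 := by
    simp only [dd1, dd2] at hE3 hT2
    linear_combination ((-2359296) + (-147456)*E + (55296)*E*x0 + (-6912)*E^2
      + (6912)*E^2*x0 + (-1296)*E^2*x0^2 + (-144)*E^3 + (54)*E^3*x0 + (-9/4)*E^4
      + (-3538944)*N^2 + (-124416)*N^2*E + (41472)*N^2*E*x0 + (648)*N^2*E^2*x0
      + (-27/2)*N^2*E^3 + (-1327104)*N^4 + (-10368)*N^4*E + (-81)*N^4*E^2) * hx0E
      + ((-320544) + (-243/2)*T + (27/8)*E^3 + (69984)*N + (347976)*N^2 + (-34992)*N^3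
      + (-10206)*N^4 + (4374)*N^5 + (-729/2)*N^6) * hE3 + 4374 * hT2
  have h36E : ((36:ℝ)*E)^3 ≠ 0 := by
    have : (0:ℝ) < 36*E := by linarith
    exact pow_ne_zero 3 this.ne'
  exact mul_right_cancel₀ h36E key

private lemma aux_x0a2 (N E x0 : ℝ) (h7 : 7 ≤ N) (hE : 0 < E)
    (hx0 : x0 = (9*N^2 + 96 - (1536 + 1152*N^2)/E - (3/2)*E)/36) : x0 < N^2/4 := by
  have hEineq : 0 < (3/2)*E^2 - 96*E + (1536+1152*N^2) := by
    nlinarith [sq_nonneg (E - 32), sq_nonneg (N - 7), h7]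
  have hiden : x0 - N^2/4 = -(((3/2)*E^2 - 96*E + (1536+1152*N^2))/E)/36 := by
    rw [hx0]; field_simp; ring
  have := div_pos hEineq hE
  linarith

set_option maxHeartbeats 1000000 in
private lemma aux_x0facts (N x0 : ℝ) (h15 : 15 ≤ N)
    (hFx0 : ((N-4)^2/4 - x0)*(N^2/4 - x0)*((N+4)^2/4 - x0) = (N-6)^2*(N-2)^2*(N+2)^2/64)
    (hx0a2 : x0 < N^2/4) :
    1 < x0 ∧ x0 < N ∧ x0 < (N-8)^2/4 ∧ x0 < (N-4)^2/4 := by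
  have hm : (0:ℝ) ≤ N - 15 := by linarith
  have hRHSpos : 0 < (N-6)^2*(N-2)^2*(N+2)^2/64 := by
    have h6 : (0:ℝ) < N - 6 := by linarith
    have h2 : (0:ℝ) < N - 2 := by linarith
    have h3 : (0:ℝ) < N + 2 := by linarith
    have := mul_pos (mul_pos (pow_pos h6 2) (pow_pos h2 2)) (pow_pos h3 2)
    linarith
  have hx0a1 : x0 < (N-4)^2/4 := by
    by_contra hcon
    push_neg at hcon
    have h2 : 0 < N^2/4 - x0 := by linarith
    have h3 : 0 < (N+4)^2/4 - x0 := by linarith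
    nlinarith [mul_pos h2 h3, hFx0, hRHSpos, hcon]
  have hx01 : 1 < x0 := by
    by_contra hcon
    push_neg at hcon
    have hF1 : (N-6)^2*(N-2)^2*(N+2)^2/64 < ((N-4)^2/4 - 1)*(N^2/4 - 1)*((N+4)^2/4 - 1) := by
      have hF1e : ((N-4)^2/4 - 1)*(N^2/4 - 1)*((N+4)^2/4 - 1)
          - (N-6)^2*(N-2)^2*(N+2)^2/64
          = (3/16)*(N-15)^5 + (207/16)*(N-15)^4 + (2823/8)*(N-15)^3 + (38007/8)*(N-15)^2
            + (504543/16)*(N-15) + 1318707/16 := by ring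
      nlinarith [pow_nonneg hm 5, pow_nonneg hm 4, pow_nonneg hm 3, pow_nonneg hm 2, hm, hF1e]
    have b1 : (0:ℝ) < (N-4)^2/4 - 1 := by nlinarith
    have b2 : (0:ℝ) < N^2/4 - 1 := by nlinarith
    have b3 : (0:ℝ) < (N+4)^2/4 - 1 := by nlinarith
    have m1 : (N-4)^2/4 - 1 ≤ (N-4)^2/4 - x0 := by linarith
    have m2 : N^2/4 - 1 ≤ N^2/4 - x0 := by linarith
    have m3 : (N+4)^2/4 - 1 ≤ (N+4)^2/4 - x0 := by linarith
    have hmul : ((N-4)^2/4 - 1)*(N^2/4 - 1) ≤ ((N-4)^2/4 - x0)*(N^2/4 - x0) :=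
      mul_le_mul m1 m2 b2.le (by linarith)
    have hmul2 : ((N-4)^2/4 - 1)*(N^2/4 - 1)*((N+4)^2/4 - 1)
        ≤ ((N-4)^2/4 - x0)*(N^2/4 - x0)*((N+4)^2/4 - x0) :=
      mul_le_mul hmul m3 b3.le (mul_nonneg (by linarith) (by linarith))
    linarith [hFx0, hF1]
  have hx0N : x0 < N := by
    by_contra hcon
    push_neg at hcon
    have hFN : ((N-4)^2/4 - N)*(N^2/4 - N)*((N+4)^2/4 - N)
        < (N-6)^2*(N-2)^2*(N+2)^2/64 := by
      have hFNe : (N-6)^2*(N-2)^2*(N+2)^2/64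
          - ((N-4)^2/4 - N)*(N^2/4 - N)*((N+4)^2/4 - N)
          = (3/16)*(N-15)^4 + (55/4)*(N-15)^3 + (2795/8)*(N-15)^2 + (14977/4)*(N-15)
            + 231639/16 := by ring
      nlinarith [pow_nonneg hm 4, pow_nonneg hm 3, pow_nonneg hm 2, hm, hFNe]
    have n1 : (0:ℝ) ≤ (N-4)^2/4 - N := by nlinarith
    have n2 : (0:ℝ) ≤ N^2/4 - N := by nlinarith
    have m1 : (N-4)^2/4 - x0 ≤ (N-4)^2/4 - N := by linarith
    have m2 : N^2/4 - x0 ≤ N^2/4 - N := by linarith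
    have m3 : (N+4)^2/4 - x0 ≤ (N+4)^2/4 - N := by linarith
    have hmul : ((N-4)^2/4 - x0)*(N^2/4 - x0) ≤ ((N-4)^2/4 - N)*(N^2/4 - N) :=
      mul_le_mul m1 m2 (by linarith) n1
    have hmul2 : ((N-4)^2/4 - x0)*(N^2/4 - x0)*((N+4)^2/4 - x0)
        ≤ ((N-4)^2/4 - N)*(N^2/4 - N)*((N+4)^2/4 - N) :=
      mul_le_mul hmul m3 (by linarith) (mul_nonneg n1 n2)
    linarith [hFx0, hFN]
  have hx0N8 : x0 < (N-8)^2/4 := by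
    by_contra hcon
    push_neg at hcon
    have hFN8 : ((N-4)^2/4 - (N-8)^2/4)*(N^2/4 - (N-8)^2/4)*((N+4)^2/4 - (N-8)^2/4)
        < (N-6)^2*(N-2)^2*(N+2)^2/64 := by
      have hFN8e : (N-6)^2*(N-2)^2*(N+2)^2/64
          - ((N-4)^2/4 - (N-8)^2/4)*(N^2/4 - (N-8)^2/4)*((N+4)^2/4 - (N-8)^2/4)
          = (1/64)*(N-15)^6 + (39/32)*(N-15)^5 + (2503/64)*(N-15)^4 + (9801/16)*(N-15)^3
            + (294847/64)*(N-15)^2 + (425175/32)*(N-15) + 2457/64 := by ring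
      nlinarith [pow_nonneg hm 6, pow_nonneg hm 5, pow_nonneg hm 4, pow_nonneg hm 3,
        pow_nonneg hm 2, hm, hFN8e]
    have n1 : (0:ℝ) ≤ (N-4)^2/4 - (N-8)^2/4 := by nlinarith
    have n2 : (0:ℝ) ≤ N^2/4 - (N-8)^2/4 := by nlinarith
    have m1 : (N-4)^2/4 - x0 ≤ (N-4)^2/4 - (N-8)^2/4 := by linarith
    have m2 : N^2/4 - x0 ≤ N^2/4 - (N-8)^2/4 := by linarith
    have m3 : (N+4)^2/4 - x0 ≤ (N+4)^2/4 - (N-8)^2/4 := by linarith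
    have hmul : ((N-4)^2/4 - x0)*(N^2/4 - x0)
        ≤ ((N-4)^2/4 - (N-8)^2/4)*(N^2/4 - (N-8)^2/4) :=
      mul_le_mul m1 m2 (by linarith) n1
    have hmul2 : ((N-4)^2/4 - x0)*(N^2/4 - x0)*((N+4)^2/4 - x0)
        ≤ ((N-4)^2/4 - (N-8)^2/4)*(N^2/4 - (N-8)^2/4)*((N+4)^2/4 - (N-8)^2/4) :=
      mul_le_mul hmul m3 (by linarith) (mul_nonneg n1 n2)
    linarith [hFx0, hFN8]
  exact ⟨hx01, hx0N, hx0N8, hx0a1⟩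

private lemma aux_d_one (d x0 : ℝ) (hd2 : d^2 = x0) (hd0 : 0 ≤ d) (h1 : 1 < x0) : 1 < d := by
  nlinarith

private lemma aux_d_lt (N d x0 : ℝ) (hd2 : d^2 = x0) (hd0 : 0 ≤ d) (h15 : 15 ≤ N)
    (hlt : x0 < (N-8)^2/4) : 2*d < N - 8 := by
  nlinarith

private lemma aux_s2 (d s : ℝ) (h1 : -d < s) (h2 : s < 1) (h3 : 1 < d) : s^2 < d^2 := by
  nlinarith [mul_pos (show 0 < d - s by linarith) (show 0 < d + s by linarith)]

private lemma aux_prod (N k B : ℝ) (hB : (k - (N-8)/2)^2 < B)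
    (h1 : B ≤ (N-4)^2/4) (h2 : B ≤ N^2/4) (h3 : B ≤ (N+4)^2/4) :
    ((N-4)^2/4 - B)*(N^2/4 - B)*((N+4)^2/4 - B)
      < (k+2)*(k+4)*(k+6)*(N-2-k)*(N-4-k)*(N-6-k) := by
  have e : (k+2)*(k+4)*(k+6)*(N-2-k)*(N-4-k)*(N-6-k)
      = ((N-4)^2/4 - (k-(N-8)/2)^2)*(N^2/4 - (k-(N-8)/2)^2)*((N+4)^2/4 - (k-(N-8)/2)^2) := by
    ring
  rw [e]
  have hs0 : 0 ≤ (k-(N-8)/2)^2 := sq_nonneg _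
  have g1 : (N-4)^2/4 - B < (N-4)^2/4 - (k-(N-8)/2)^2 := by linarith
  have g2 : N^2/4 - B < N^2/4 - (k-(N-8)/2)^2 := by linarith
  have g3 : (N+4)^2/4 - B < (N+4)^2/4 - (k-(N-8)/2)^2 := by linarith
  exact mul_lt_mul'' (mul_lt_mul'' g1 g2 (by linarith) (by linarith)) g3
    (mul_nonneg (by linarith) (by linarith)) (by linarith)

private lemma aux_s2N_small (N k : ℝ) (h7 : 7 ≤ N) (h14 : N ≤ 14)
    (h0 : 0 < k) (h1 : k < (N-6)/2) : (k - (N-8)/2)^2 < N := by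
  nlinarith [mul_pos h0 (sub_pos.2 h1),
    mul_nonneg (sub_nonneg.2 h7) (sub_nonneg.2 h14), sq_nonneg (k - (N-8)/2)]

set_option maxHeartbeats 1000000 in
private lemma aux_c0_small (N k : ℝ) (h7 : 7 ≤ N) (h14 : N ≤ 14)
    (h0 : 0 < k) (h1 : k < (N-6)/2) :
    (N-6)^2*(N-2)^2*(N+2)^2/64 < (k+2)*(k+4)*(k+6)*(N-2-k)*(N-4-k)*(N-6-k) := by
  rcases le_total N 10 with h10 | h10
  · have hB : (k - (N-8)/2)^2 < 1 := by
      nlinarith [mul_pos (show (0:ℝ) < k - (N-8)/2 + 1 by linarith)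
        (show (0:ℝ) < 1 - (k - (N-8)/2) by linarith)]
    have hprod := aux_prod N k 1 hB (by nlinarith) (by nlinarith) (by nlinarith)
    have hF1 : (N-6)^2*(N-2)^2*(N+2)^2/64 ≤ ((N-4)^2/4 - 1)*(N^2/4 - 1)*((N+4)^2/4 - 1) := by
      nlinarith [mul_nonneg (sub_nonneg.2 h7) (sub_nonneg.2 h10), sq_nonneg (N-7),
        sq_nonneg (N-10),
        mul_nonneg (mul_nonneg (sub_nonneg.2 h7) (sub_nonneg.2 h10)) (sub_nonneg.2 h7),
        mul_nonneg (mul_nonneg (sub_nonneg.2 h7) (sub_nonneg.2 h10)) (sub_nonneg.2 h10)]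
    linarith
  · have hB : (k - (N-8)/2)^2 < (N-8)^2/4 := by
      nlinarith [mul_pos (show (0:ℝ) < k - (N-8)/2 + (N-8)/2 by linarith)
        (show (0:ℝ) < (N-8)/2 - (k - (N-8)/2) by linarith)]
    have hprod := aux_prod N k ((N-8)^2/4) hB (by nlinarith) (by nlinarith) (by nlinarith)
    have hFB : (N-6)^2*(N-2)^2*(N+2)^2/64
        ≤ ((N-4)^2/4 - (N-8)^2/4)*(N^2/4 - (N-8)^2/4)*((N+4)^2/4 - (N-8)^2/4) := by
      nlinarith [mul_nonneg (sub_nonneg.2 h10) (sub_nonneg.2 h14), sq_nonneg (N-12),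
        mul_nonneg (mul_nonneg (sub_nonneg.2 h10) (sub_nonneg.2 h14)) (sub_nonneg.2 h10),
        mul_nonneg (mul_nonneg (sub_nonneg.2 h10) (sub_nonneg.2 h14)) (sub_nonneg.2 h14),
        mul_nonneg (mul_nonneg (mul_nonneg (sub_nonneg.2 h10) (sub_nonneg.2 h14))
          (sub_nonneg.2 h10)) (sub_nonneg.2 h10),
        mul_nonneg (mul_nonneg (mul_nonneg (sub_nonneg.2 h10) (sub_nonneg.2 h14))
          (sub_nonneg.2 h14)) (sub_nonneg.2 h14)]
    linarith

set_option maxHeartbeats 1000000 in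
private lemma aux_c1_large (N s : ℝ) (hN : 15 ≤ N) (hs1 : s < 1) (hs2 : s^2 < N) :
    0 < 12 - 3*s + 24*s^2 - 12*s^3 - 6*s^4 + 3*s^5 + (141/2)*N - 18*N*s + 6*N*s^2
      + (3/2)*N*s^4 + 3*N^2 - (3/2)*N^2*s + 3*N^2*s^2 - (3/2)*N^2*s^3
      - (39/4)*N^3 + (3/2)*N^3*s - (3/4)*N^3*s^2 + (9/8)*N^4 := by
  nlinarith [mul_nonneg (sub_nonneg.2 hs2.le) (sq_nonneg (N - s)),
    mul_nonneg (sub_nonneg.2 hs2.le) (sq_nonneg (N + s)),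
    mul_nonneg (sub_nonneg.2 hs2.le) (sq_nonneg s), sq_nonneg (N-15),
    mul_nonneg (sub_nonneg.2 hs2.le) (sub_nonneg.2 hs1.le),
    mul_nonneg (mul_nonneg (sub_nonneg.2 hs2.le) (sub_nonneg.2 hs1.le)) (sub_nonneg.2 hN),
    sq_nonneg s, sq_nonneg (s+1), mul_nonneg (sub_nonneg.2 hs2.le) (sq_nonneg (s+1))]

set_option maxHeartbeats 1000000 in
private lemma aux_c2 (N s : ℝ) (hN : 7 ≤ N) (hs1 : s < 1) (hs2 : s^2 < N)
    (hsk : -(N-8)/2 < s) :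
    0 < -36 + 9*s - 3*s^3 - (39/2)*N + 3*N*s - (3/2)*N*s^2 + (9/2)*N^2 := by
  nlinarith [sq_nonneg s, mul_nonneg (sub_nonneg.2 hs2.le) (sq_nonneg s), sq_nonneg (s+4),
    mul_nonneg (sub_nonneg.2 hs2.le) (sub_nonneg.2 hs1.le), sq_nonneg (N - 15),
    mul_pos (sub_pos.2 hs1) (sub_pos.2 hsk),
    mul_nonneg (sub_nonneg.2 hN) (sub_nonneg.2 hs1.le), sq_nonneg (N-7)]

set_option maxHeartbeats 1000000 in
private lemma aux_c1_small (N k : ℝ) (hN : 7 ≤ N) (hN2 : N ≤ 15)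
    (h0 : 0 < k) (h1 : k < (N-6)/2) :
    0 < (48*N^2 - 480*N + 1152)
      + k*(1917 + 1224*k + 372*k^2 + 54*k^3 + 3*k^4 - 810*N - 408*N*k - 84*N*k^2
        - 6*N*k^3 + (159/2)*N^2 + 30*N^2*k + 3*N^2*k^2 + (3/2)*N^3 - (3/16)*N^4) := by
  have hg : 0 < 1917 + 1224*k + 372*k^2 + 54*k^3 + 3*k^4 - 810*N - 408*N*k - 84*N*k^2
      - 6*N*k^3 + (159/2)*N^2 + 30*N^2*k + 3*N^2*k^2 + (3/2)*N^3 - (3/16)*N^4 := by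
    nlinarith [mul_pos h0 (sub_pos.2 h1), mul_nonneg (sub_nonneg.2 hN) (sub_nonneg.2 hN2),
      sq_nonneg (N-11), mul_nonneg (mul_nonneg (sub_nonneg.2 hN) (sub_nonneg.2 hN2)) h0.le,
      mul_nonneg (mul_nonneg (sub_nonneg.2 hN) (sub_nonneg.2 hN2)) (sub_pos.2 h1).le,
      sq_nonneg k, mul_nonneg (sub_nonneg.2 hN2) (sub_pos.2 h1).le,
      mul_nonneg (sub_nonneg.2 hN) h0.le, sq_nonneg (k - (N-6)/2)]
  have hquad : 0 < 48*N^2 - 480*N + 1152 := by nlinarith [sq_nonneg (N - 5)]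
  have := mul_pos h0 hg
  linarith

set_option maxHeartbeats 2000000 in
/-- **Lemma 4.1.** For `n ≥ 7` and `(n+6)/(n-6) < p < p_c(n)` (upper bound imposed only when
`n ≥ 15`), setting `k = 6/(p-1)`, the coefficients `c₀`, `c₁`, `c₂` are all positive. -/
theorem triharmonic_coefficients_pos (n : ℕ) (hn : 7 ≤ n) (p : ℝ)
    (hp : ((n : ℝ) + 6) / ((n : ℝ) - 6) < p) (hpc : 15 ≤ n → p < pc n)
    (k k0 k1 k2 c0 c1 c2 : ℝ)
    (hk : k = 6 / (p - 1))
    (hk0 : k0 = k * (k + 2) * (k + 4) * ((n : ℝ) - 2 - k) * ((n : ℝ) - 4 - k) * ((n : ℝ) - 6 - k))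
    (hk1 : k1 = k * (k + 2 - (n : ℝ)) * (k + 4) * (k + 6 - (n : ℝ))
      + (k + 2) * (k + 4 - (n : ℝ)) * (k + 4) * (k + 6 - (n : ℝ))
      + k * (k + 2 - (n : ℝ)) * (k + 2) * (k + 4 - (n : ℝ)))
    (hk2 : k2 = (k + 4) * ((n : ℝ) - k - 6) + k * ((n : ℝ) - k - 2) + (k + 2) * ((n : ℝ) - k - 4))
    (hc0 : c0 = (k + 6) * k0 / k - ((n : ℝ) - 6) ^ 2 * ((n : ℝ) - 2) ^ 2 * ((n : ℝ) + 2) ^ 2 / 64)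
    (hc1 : c1 = (k + 6) * k1
      - k * ((n : ℝ) - 6) * ((n : ℝ) + 2) * (3 * (n : ℝ) ^ 2 - 12 * (n : ℝ) - 4) / 16)
    (hc2 : c2 = (k + 6) * k2 - k * (3 * (n : ℝ) ^ 2 - 12 * (n : ℝ) - 20) / 4) :
    0 < c0 ∧ 0 < c1 ∧ 0 < c2 := by
  have hN7 : (7:ℝ) ≤ (n:ℝ) := by exact_mod_cast hn
  set N := (n:ℝ) with hNdef
  have hN6 : (0:ℝ) < N - 6 := by linarith
  have hp1 : 1 < p := by
    have h1 : 1 < (N+6)/(N-6) := by rw [lt_div_iff₀ hN6]; linarith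
    linarith
  have hp0 : 0 < p - 1 := by linarith
  have hple : N + 6 < p * (N - 6) := (div_lt_iff₀ hN6).1 hp
  have hkpos : 0 < k := by rw [hk]; positivity
  have hkub : k < (N - 6)/2 := by
    rw [hk, div_lt_div_iff₀ hp0 two_pos]
    nlinarith
  have hc0' : c0 = (k+2)*(k+4)*(k+6)*(N-2-k)*(N-4-k)*(N-6-k)
      - (N-6)^2*(N-2)^2*(N+2)^2/64 := by
    rw [hc0, hk0]
    field_simp
  have hsk : -(N-8)/2 < k - (N-8)/2 := by linarith
  have hs1 : k - (N-8)/2 < 1 := by linarith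
  obtain ⟨s, hs⟩ : ∃ s : ℝ, s = k - (N-8)/2 := ⟨_, rfl⟩
  have hks : k = s + (N-8)/2 := by rw [hs]; ring
  have hsk' : -(N-8)/2 < s := by rw [hs]; exact hsk
  have hs1' : s < 1 := by rw [hs]; exact hs1
  have hc1s : c1 = 12 - 3*s + 24*s^2 - 12*s^3 - 6*s^4 + 3*s^5 + (141/2)*N - 18*N*s + 6*N*s^2
      + (3/2)*N*s^4 + 3*N^2 - (3/2)*N^2*s + 3*N^2*s^2 - (3/2)*N^2*s^3
      - (39/4)*N^3 + (3/2)*N^3*s - (3/4)*N^3*s^2 + (9/8)*N^4 := by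
    rw [hc1, hk1, hks]; ring
  have hc2s : c2 = -36 + 9*s - 3*s^3 - (39/2)*N + 3*N*s - (3/2)*N*s^2 + (9/2)*N^2 := by
    rw [hc2, hk2, hks]; ring
  rcases le_or_gt 15 n with h15 | h15
  · -- ## Case n ≥ 15
    have hN15 : (15:ℝ) ≤ N := by rw [hNdef]; exact_mod_cast h15
    have hd2pos := aux_d2pos N hN15
    set T := Real.sqrt (dd2 N) with hTdef
    have hT0 : 0 ≤ T := Real.sqrt_nonneg _
    have hT2 : T^2 = dd2 N := Real.sq_sqrt hd2pos.le
    have h36T : 36*T < -dd1 N := aux_T N T hN15 hT0 hT2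
    have hX : 0 < -(dd1 N + 36*T) := by linarith
    set E := dd0 N with hEdef
    have hEX : E = (-(dd1 N + 36*T))^((1:ℝ)/3) := by
      rw [hEdef, hTdef]; simp only [dd0]
    have hEpos : 0 < E := by rw [hEX]; exact Real.rpow_pos_of_pos hX _
    have hE3 : E^3 = -(dd1 N + 36*T) := by
      rw [hEX, ← Real.rpow_natCast ((-(dd1 N + 36*T)) ^ ((1:ℝ)/3)) 3, ← Real.rpow_mul hX.le]
      norm_num
    set x0 := (9*N^2 + 96 - (1536 + 1152*N^2)/E - (3/2)*E)/36 with hx0def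
    have hx0E : x0 * (36*E) = (9*N^2+96)*E - (1536+1152*N^2) - (3/2)*E^2 := by
      rw [hx0def]; field_simp
    have hFx0 := aux_Fx0 N E T x0 hEpos hE3 hT2 hx0E
    have hx0a2 : x0 < N^2/4 := aux_x0a2 N E x0 (by linarith) hEpos hx0def
    obtain ⟨hx01, hx0N, hx0N8, hx0a1⟩ := aux_x0facts N x0 hN15 hFx0 hx0a2
    -- properties of d = dfn N
    have hdfn : dfn N = (1/6)*Real.sqrt (36*x0) := by
      simp only [dfn]
      rw [← hEdef]
      have h36 : 9*N^2 + 96 - (1536 + 1152*N^2)/E - (3/2)*E = 36*x0 := by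
        rw [hx0def]; ring
      rw [h36]
    have hx0pos : (0:ℝ) < x0 := by linarith
    have hd2x : (dfn N)^2 = x0 := by
      rw [hdfn, mul_pow, Real.sq_sqrt (by linarith : (0:ℝ) ≤ 36*x0)]
      ring
    have hdnn : 0 ≤ dfn N := by rw [hdfn]; positivity
    have hd1' : 1 < dfn N := aux_d_one (dfn N) x0 hd2x hdnn hx01
    have hdlt : 2*dfn N < N - 8 := aux_d_lt N (dfn N) x0 hd2x hdnn hN15 hx0N8
    have hDen : 0 < N - 8 - 2*dfn N := by linarith
    have hpcv : p < pc N := hpc h15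
    have hpc1 : pc N = 12/(N - 8 - 2*dfn N) + 1 := by
      simp only [pc]
      field_simp
      ring
    have hklb : (N - 8 - 2*dfn N)/2 < k := by
      have h1 : p - 1 < 12/(N-8-2*dfn N) := by rw [hpc1] at hpcv; linarith
      have h2 : (p-1)*(N-8-2*dfn N) < 12 := by
        have := (lt_div_iff₀ hDen).1 h1
        linarith
      rw [hk, div_lt_div_iff₀ two_pos hp0]
      linarith
    have hslb : -dfn N < s := by rw [hs]; linarith
    have hs2x0 : s^2 < x0 := by
      have := aux_s2 (dfn N) s hslb hs1' hd1'
      linarith [hd2x]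
    have hs2N : s^2 < N := by linarith
    -- c0 > 0
    have hB : (k - (N-8)/2)^2 < x0 := by rw [← hs]; exact hs2x0
    have hprod := aux_prod N k x0 hB hx0a1.le hx0a2.le (by linarith)
    refine ⟨by rw [hc0']; linarith [hFx0, hprod], ?_, ?_⟩
    · rw [hc1s]; exact aux_c1_large N s hN15 hs1' hs2N
    · rw [hc2s]; exact aux_c2 N s (by linarith) hs1' hs2N hsk'
  · -- ## Case 7 ≤ n ≤ 14
    have hN14 : N ≤ 14 := by
      rw [hNdef]
      exact_mod_cast Nat.lt_succ_iff.mp h15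
    have hs2N : s^2 < N := by
      rw [hs]; exact aux_s2N_small N k hN7 hN14 hkpos hkub
    refine ⟨?_, ?_, ?_⟩
    · rw [hc0']
      linarith [aux_c0_small N k hN7 hN14 hkpos hkub]
    · have hc1k : c1 = (48*N^2 - 480*N + 1152)
          + k*(1917 + 1224*k + 372*k^2 + 54*k^3 + 3*k^4 - 810*N - 408*N*k - 84*N*k^2
            - 6*N*k^3 + (159/2)*N^2 + 30*N^2*k + 3*N^2*k^2 + (3/2)*N^3 - (3/16)*N^4) := by
        rw [hc1, hk1]; ring
      rw [hc1k]
      exact aux_c1_small N k hN7 (by linarith) hkpos hkub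
    · rw [hc2s]; exact aux_c2 N s hN7 hs1' hs2N hsk'
end
end

section
/- For every real number n ≥ 15, one has (n−8)/2 − d(n) > n/2 − 3 − (1/10)·√(15n² − 60n + 190). -/
open MeasureTheory Filter

noncomputable section

set_option maxHeartbeats 1000000 in
private lemma aux_d2_nonneg (n : ℝ) (hn : 15 ≤ n) : (0:ℝ) ≤ dd2 n := by
  have hm : (0:ℝ) ≤ n - 15 := by linarith
  unfold dd2
  nlinarith [pow_nonneg hm 2, pow_nonneg hm 3, pow_nonneg hm 4, pow_nonneg hm 5,
    pow_nonneg hm 6, pow_nonneg hm 7, pow_nonneg hm 8, pow_nonneg hm 9,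
    pow_nonneg hm 10, pow_nonneg hm 11, pow_nonneg hm 12]

set_option maxHeartbeats 1000000 in
private lemma aux_Q_nonneg (n : ℝ) (hn : 15 ≤ n) : (0:ℝ) ≤ (-(dd1 n) - 127^3) / 36 := by
  have hm : (0:ℝ) ≤ n - 15 := by linarith
  unfold dd1
  nlinarith [pow_nonneg hm 2, pow_nonneg hm 3, pow_nonneg hm 4, pow_nonneg hm 5,
    pow_nonneg hm 6]

set_option maxHeartbeats 2000000 in
private lemma aux_P2 (n : ℝ) (hn : 15 ≤ n) :
    dd2 n ≤ ((-(dd1 n) - 127^3) / 36)^2 := by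
  have hm : (0:ℝ) ≤ n - 15 := by linarith
  unfold dd1 dd2
  nlinarith [pow_nonneg hm 2, pow_nonneg hm 3, pow_nonneg hm 4, pow_nonneg hm 5,
    pow_nonneg hm 6]

set_option maxHeartbeats 2000000 in
private lemma aux_P1 (n : ℝ) (hn : 15 ≤ n) :
    ((-(dd1 n) - 187^3) / 36)^2 ≤ dd2 n := by
  have hm : (0:ℝ) ≤ n - 15 := by linarith
  unfold dd1 dd2
  nlinarith [pow_nonneg hm 2, pow_nonneg hm 3, pow_nonneg hm 4, pow_nonneg hm 5,
    pow_nonneg hm 6]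

set_option maxHeartbeats 1000000 in
/-- **Inequality (7.13)–(7.14) combined.** For every real `n ≥ 15`,
`(n-8)/2 - d(n) > n/2 - 3 - (1/10)√(15n² - 60n + 190)`. -/
theorem pc_lt_pm_key_inequality (n : ℝ) (hn : 15 ≤ n) :
    (n - 8) / 2 - dfn n >
      n / 2 - 3 - (1 / 10) * Real.sqrt (15 * n ^ 2 - 60 * n + 190) := by
  have hm : (0:ℝ) ≤ n - 15 := by linarith
  have hd2 : (0:ℝ) ≤ dd2 n := aux_d2_nonneg n hn
  have hsd2 : (0:ℝ) ≤ Real.sqrt (dd2 n) := Real.sqrt_nonneg _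
  have hub : Real.sqrt (dd2 n) ≤ (-(dd1 n) - 127^3) / 36 := by
    calc Real.sqrt (dd2 n) ≤ Real.sqrt (((-(dd1 n) - 127^3) / 36)^2) :=
            Real.sqrt_le_sqrt (aux_P2 n hn)
      _ = (-(dd1 n) - 127^3) / 36 := Real.sqrt_sq (aux_Q_nonneg n hn)
  have hlb : (-(dd1 n) - 187^3) / 36 ≤ Real.sqrt (dd2 n) := by
    calc (-(dd1 n) - 187^3) / 36 ≤ |(-(dd1 n) - 187^3) / 36| := le_abs_self _
      _ = Real.sqrt (((-(dd1 n) - 187^3) / 36)^2) := (Real.sqrt_sq_eq_abs _).symm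
      _ ≤ Real.sqrt (dd2 n) := Real.sqrt_le_sqrt (aux_P1 n hn)
  set X : ℝ := -(dd1 n + 36 * Real.sqrt (dd2 n)) with hXdef
  have hX_lb : (127:ℝ)^3 ≤ X := by rw [hXdef]; nlinarith [hub]
  have hX_ub : X ≤ (187:ℝ)^3 := by rw [hXdef]; nlinarith [hlb]
  have hX0 : (0:ℝ) ≤ X := by nlinarith [hX_lb]
  have hd0_def : dd0 n = X ^ ((1:ℝ)/3) := by rw [dd0, hXdef]
  have hd0_nonneg : 0 ≤ dd0 n := by rw [hd0_def]; exact Real.rpow_nonneg hX0 _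
  have hd0_cube : dd0 n ^ (3:ℕ) = X := by
    rw [hd0_def, ← Real.rpow_natCast (X ^ ((1:ℝ)/3)) 3, ← Real.rpow_mul hX0]
    norm_num
  have hd0_lb : (127:ℝ) ≤ dd0 n := by
    nlinarith [hd0_cube, hX_lb, hd0_nonneg, sq_nonneg (dd0 n - 127),
      sq_nonneg (dd0 n + 127)]
  have hd0_ub : dd0 n ≤ 187 := by
    nlinarith [hd0_cube, hX_ub, hd0_nonneg, sq_nonneg (dd0 n - 187),
      sq_nonneg (dd0 n + 187)]
  have hd0_pos : (0:ℝ) < dd0 n := by linarith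
  have hdiv : (1536 + 1152*n^2) / 187 ≤ (1536 + 1152*n^2) / dd0 n := by
    apply div_le_div_of_nonneg_left _ hd0_pos hd0_ub
    positivity
  set E : ℝ := 9*n^2 + 96 - (1536 + 1152*n^2) / dd0 n - (3/2) * dd0 n with hEdef
  have hE_ub : E ≤ 9*n^2 + 96 - (1536 + 1152*n^2) / 187 - (3/2) * 127 := by
    rw [hEdef]; linarith [hd0_lb]
  set s : ℝ := Real.sqrt (15 * n ^ 2 - 60 * n + 190) with hsdef
  have hq0 : (0:ℝ) ≤ 15 * n ^ 2 - 60 * n + 190 := by nlinarith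
  have hs0 : 0 ≤ s := Real.sqrt_nonneg _
  have hs2 : s ^ 2 = 15 * n ^ 2 - 60 * n + 190 := Real.sq_sqrt hq0
  have hs10 : (10:ℝ) < s := by nlinarith [hs2, hs0, sq_nonneg (n - 15)]
  have hkey : Real.sqrt E < (3/5) * s - 6 := by
    rw [Real.sqrt_lt' (by linarith)]
    nlinarith [hE_ub, hs2, sq_nonneg (s - 52), hs0, sq_nonneg (n - 15), hm]
  have hdfn : dfn n = (1/6) * Real.sqrt E := by rw [dfn, hEdef]
  rw [hdfn]
  linarith [hkey]
end
end

section
/- Define d₀(n) = (−(d₁(n) + 36·√(d₂(n))))^{1/3} (real cube root). Then: (i) d₀ is strictly decreasing on [15, ∞), i.e. for all real 15 ≤ m < n one has d₀(n) < d₀(m); and (ii) for every real n ≥ 15 one has 128 < d₀(n) < 187. -/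
open MeasureTheory Filter

noncomputable section

/-! After the substitution `n = 15 + t`, each polynomial inequality involved becomes a
polynomial in `t ≥ 0` with positive coefficients. The radicand `-(d₁ + 36√d₂)` is squeezed
between `128³` and `187³` by squaring, and it is strictly decreasing because its derivative
`-(d₁' + 18 d₂'/√d₂)` is negative, which again reduces by squaring to `d₁'² d₂ < 18² d₂'²`. -/

lemma lt_mul_sqrt_of_sq_lt {a c y : ℝ} (hc : 0 ≤ c) (h : a ^ 2 < c ^ 2 * y) : a < c * √y := by
  rw [← Real.sqrt_sq hc, ← Real.sqrt_mul (sq_nonneg c)]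
  exact Real.lt_sqrt_of_sq_lt h

lemma mul_sqrt_lt_of_lt_sq {a c y : ℝ} (hc : 0 ≤ c) (ha : 0 < a) (h : c ^ 2 * y < a ^ 2) :
    c * √y < a := by
  rw [← Real.sqrt_sq hc, ← Real.sqrt_mul (sq_nonneg c)]
  exact (Real.sqrt_lt' ha).2 h

lemma pow_three_rpow_one_third {x : ℝ} (hx : 0 ≤ x) : (x ^ 3) ^ ((1 : ℝ) / 3) = x := by
  rw [one_div]
  exact_mod_cast Real.pow_rpow_inv_natCast hx three_ne_zero

lemma differentiable_dd1 : Differentiable ℝ dd1 := by unfold dd1; fun_prop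

lemma differentiable_dd2 : Differentiable ℝ dd2 := by unfold dd2; fun_prop

lemma deriv_dd1 (x : ℝ) :
    deriv dd1 x = -648 * x ^ 5 + 6480 * x ^ 4 - 12096 * x ^ 3 - 31104 * x ^ 2 + 206208 * x + 20736 := by
  unfold dd1
  simp (disch := fun_prop) [deriv_fun_add, deriv_fun_sub]
  ring

lemma deriv_dd2 (x : ℝ) :
    deriv dd2 x = 108 * x ^ 11 - 2376 * x ^ 10 + 18000 * x ^ 9 - 38880 * x ^ 8 - 246912 * x ^ 7
      + 1757952 * x ^ 6 - 4142592 * x ^ 5 - 9681920 * x ^ 4 + 27663360 * x ^ 3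
      + 14456832 * x ^ 2 - 33288192 * x - 3039232 := by
  unfold dd2
  simp (disch := fun_prop) [deriv_fun_add, deriv_fun_sub]
  ring

section PolynomialInequalities

variable {n : ℝ}

lemma dd2_pos (hn : 15 ≤ n) : 0 < dd2 n := by
  obtain ⟨t, ht, rfl⟩ := le_iff_exists_nonneg_add.1 hn
  unfold dd2; ring_nf; positivity

lemma lt_neg_dd1 (hn : 15 ≤ n) : 128 ^ 3 < -dd1 n := by
  obtain ⟨t, ht, rfl⟩ := le_iff_exists_nonneg_add.1 hn
  rw [← sub_pos]; unfold dd1; ring_nf; positivity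

lemma sq_neg_dd1_sub_lt_dd2 (hn : 15 ≤ n) : (-dd1 n - 187 ^ 3) ^ 2 < 36 ^ 2 * dd2 n := by
  obtain ⟨t, ht, rfl⟩ := le_iff_exists_nonneg_add.1 hn
  rw [← sub_pos]; unfold dd1 dd2; ring_nf; positivity

lemma dd2_lt_sq_neg_dd1_sub (hn : 15 ≤ n) : 36 ^ 2 * dd2 n < (-dd1 n - 128 ^ 3) ^ 2 := by
  obtain ⟨t, ht, rfl⟩ := le_iff_exists_nonneg_add.1 hn
  rw [← sub_pos]; unfold dd1 dd2; ring_nf; positivity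

lemma deriv_dd1_neg (hn : 15 ≤ n) : deriv dd1 n < 0 := by
  obtain ⟨t, ht, rfl⟩ := le_iff_exists_nonneg_add.1 hn
  rw [← neg_pos, deriv_dd1]; ring_nf; positivity

lemma deriv_dd2_pos (hn : 15 ≤ n) : 0 < deriv dd2 n := by
  obtain ⟨t, ht, rfl⟩ := le_iff_exists_nonneg_add.1 hn
  rw [deriv_dd2]; ring_nf; positivity

lemma sq_neg_deriv_dd1_mul_dd2_lt (hn : 15 ≤ n) :
    (-deriv dd1 n) ^ 2 * dd2 n < (18 * deriv dd2 n) ^ 2 := by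
  obtain ⟨t, ht, rfl⟩ := le_iff_exists_nonneg_add.1 hn
  rw [← sub_pos, deriv_dd1, deriv_dd2]; unfold dd2; ring_nf; positivity

end PolynomialInequalities

def dd0Radicand (n : ℝ) : ℝ := -(dd1 n + 36 * √(dd2 n))

lemma dd0_eq_rpow (n : ℝ) : dd0 n = dd0Radicand n ^ ((1 : ℝ) / 3) := rfl

lemma dd0Radicand_bounds {n : ℝ} (hn : 15 ≤ n) :
    128 ^ 3 < dd0Radicand n ∧ dd0Radicand n < 187 ^ 3 := by
  have hlo : 36 * √(dd2 n) < -dd1 n - 128 ^ 3 :=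
    mul_sqrt_lt_of_lt_sq (by norm_num) (by linarith [lt_neg_dd1 hn]) (dd2_lt_sq_neg_dd1_sub hn)
  have hhi : -dd1 n - 187 ^ 3 < 36 * √(dd2 n) :=
    lt_mul_sqrt_of_sq_lt (by norm_num) (sq_neg_dd1_sub_lt_dd2 hn)
  constructor <;> unfold dd0Radicand <;> linarith

lemma dd0Radicand_strictAntiOn : StrictAntiOn dd0Radicand (Set.Ici 15) := by
  have hcont : Continuous dd0Radicand :=
    (differentiable_dd1.continuous.add
      (continuous_const.mul differentiable_dd2.continuous.sqrt)).neg
  refine strictAntiOn_of_deriv_neg (convex_Ici 15) hcont.continuousOn fun x hx => ?_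
  have hx15 : 15 ≤ x := interior_subset hx
  have hd2 := dd2_pos hx15
  have hderiv : HasDerivAt dd0Radicand
      (-(deriv dd1 x + 36 * (deriv dd2 x / (2 * √(dd2 x))))) x :=
    ((differentiable_dd1 x).hasDerivAt.add
      (((differentiable_dd2 x).hasDerivAt.sqrt hd2.ne').const_mul 36)).neg
  have key : -deriv dd1 x < 18 * deriv dd2 x / √(dd2 x) :=
    (lt_div_iff₀ (Real.sqrt_pos.2 hd2)).2 <|
      mul_sqrt_lt_of_lt_sq (neg_nonneg.2 (deriv_dd1_neg hx15).le)
        (by linarith [deriv_dd2_pos hx15]) (sq_neg_deriv_dd1_mul_dd2_lt hx15)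
  rw [hderiv.deriv, neg_lt_zero]
  linarith [show 36 * (deriv dd2 x / (2 * √(dd2 x))) = 18 * deriv dd2 x / √(dd2 x) by ring]

/-- **Lemma 8.1(2).** The function `d₀` is strictly decreasing on `[15, ∞)`, and
`128 < d₀(n) < 187` for all real `n ≥ 15`. -/
theorem dd0_strictAnti_and_bounds :
    (∀ m n : ℝ, 15 ≤ m → m < n → dd0 n < dd0 m) ∧
    (∀ n : ℝ, 15 ≤ n → 128 < dd0 n ∧ dd0 n < 187) := by
  have cbrt_lt {a b : ℝ} (ha : 0 ≤ a) (hab : a < b) : a ^ ((1 : ℝ) / 3) < b ^ ((1 : ℝ) / 3) :=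
    Real.rpow_lt_rpow ha hab (by norm_num)
  simp only [dd0_eq_rpow]
  refine ⟨fun m n hm hmn => ?_, fun n hn => ?_⟩
  · have hn : 15 ≤ n := hm.trans hmn.le
    exact cbrt_lt (by linarith [(dd0Radicand_bounds hn).1]) (dd0Radicand_strictAntiOn hm hn hmn)
  · obtain ⟨hlo, hhi⟩ := dd0Radicand_bounds hn
    have h128 := cbrt_lt (by positivity) hlo
    have h187 := cbrt_lt (by linarith) hhi
    rw [pow_three_rpow_one_third (by norm_num)] at h128 h187
    exact ⟨h128, h187⟩
end
end

section
/- As the real variable n tends to +∞, the following limits hold: d(n)/√n → 1, d(n) − √n → 0, and √n·(d(n) − √n) → −1/2. -/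
open MeasureTheory Filter

noncomputable section

/-!
With `K = 256(3n² + 4)` one has `d₁² - 1296 d₂ = K³`, so `d₀` and `K / d₀` are the two cube roots
of Cardano's formula and `s = d₀ + K / d₀` solves `s³ - 3Ks + 2d₁ = 0`; moreover
`36 d(n)² = 9n² + 96 - (3/2) s`. At `σ = 6n² - 24n + 88` the cubic only has the defect
`55296 (n - 1)(n - 2)² = O(n³)`, while its difference quotient between the nonnegative points `s`
and `σ` is at least `σ² - 3K ~ 36 n⁴`. Hence `s - σ = O(1/n)`, i.e. `d(n)² - n → -1`, and the three
limits hold for `√g` whenever `g(n) - n` converges.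
-/

open Real Topology

section SqrtAsymptotics

variable {g : ℝ → ℝ} {L : ℝ}

lemma tendsto_div_self_of_tendsto_sub_self (h : Tendsto (fun x => g x - x) atTop (𝓝 L)) :
    Tendsto (fun x => g x / x) atTop (𝓝 1) := by
  have h' := (h.div_atTop tendsto_id).const_add 1
  rw [add_zero] at h'
  refine h'.congr' ?_
  filter_upwards [eventually_ne_atTop 0] with x hx
  show 1 + (g x - x) / x = g x / x
  field_simp
  ring

lemma tendsto_sqrt_div_sqrt_of_tendsto_sub_self (h : Tendsto (fun x => g x - x) atTop (𝓝 L)) :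
    Tendsto (fun x => √(g x) / √x) atTop (𝓝 1) := by
  have h' := (continuous_sqrt.tendsto 1).comp (tendsto_div_self_of_tendsto_sub_self h)
  rw [sqrt_one] at h'
  refine h'.congr' ?_
  filter_upwards [eventually_ge_atTop 0] with x hx
  exact sqrt_div' _ hx

lemma tendsto_sqrt_mul_sqrt_sub_sqrt_of_tendsto_sub_self
    (h : Tendsto (fun x => g x - x) atTop (𝓝 L)) :
    Tendsto (fun x => √x * (√(g x) - √x)) atTop (𝓝 (L / 2)) := by
  have hratio := tendsto_sqrt_div_sqrt_of_tendsto_sub_self h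
  have h' := h.div (hratio.add_const 1) (by norm_num)
  rw [one_add_one_eq_two] at h'
  refine h'.congr' ?_
  have hg : ∀ᶠ x in atTop, 0 < g x / x :=
    (tendsto_div_self_of_tendsto_sub_self h).eventually (eventually_gt_nhds one_pos)
  filter_upwards [hg, eventually_gt_atTop 0] with x hgx_div hx
  have hgx : 0 ≤ g x := ((div_pos_iff_of_pos_right hx).mp hgx_div).le
  have hsx : 0 < √x := sqrt_pos.mpr hx
  -- `√g - √x = (g - x) / (√g + √x)`
  show (g x - x) / (√(g x) / √x + 1) = √x * (√(g x) - √x)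
  rw [div_add_one hsx.ne', div_div_eq_mul_div, div_eq_iff (by positivity)]
  nlinarith [sq_sqrt hgx, sq_sqrt hx.le]

lemma tendsto_sqrt_sub_sqrt_of_tendsto_sub_self (h : Tendsto (fun x => g x - x) atTop (𝓝 L)) :
    Tendsto (fun x => √(g x) - √x) atTop (𝓝 0) := by
  refine ((tendsto_sqrt_mul_sqrt_sub_sqrt_of_tendsto_sub_self h).div_atTop
    tendsto_sqrt_atTop).congr' ?_
  filter_upwards [eventually_gt_atTop 0] with x hx
  rw [mul_div_cancel_left₀ _ (sqrt_pos.mpr hx).ne']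

end SqrtAsymptotics

lemma cube_add_div_of_mul_eq_cube {c K y : ℝ} (hc : c ≠ 0) (h : c ^ 3 * y = K ^ 3) :
    (c + K / c) ^ 3 = 3 * K * (c + K / c) + c ^ 3 + y := by
  have hy : y = K ^ 3 / c ^ 3 := by field_simp; linear_combination h
  rw [hy]
  field_simp
  ring

lemma abs_sub_le_of_depressed_cubic {K s σ : ℝ} (hs : 0 ≤ s) (hσ : 0 ≤ σ) (hK : 3 * K < σ ^ 2) :
    |s - σ| ≤ |s ^ 3 - 3 * K * s - (σ ^ 3 - 3 * K * σ)| / (σ ^ 2 - 3 * K) := by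
  have hfactor : s ^ 3 - 3 * K * s - (σ ^ 3 - 3 * K * σ)
      = (s - σ) * (s ^ 2 + s * σ + σ ^ 2 - 3 * K) := by ring
  rw [le_div_iff₀ (by linarith), hfactor, abs_mul]
  gcongr
  exact le_abs.mpr (Or.inl (by nlinarith [mul_nonneg hs hσ, sq_nonneg s]))

lemma dd1_sq_sub_dd2 (n : ℝ) : dd1 n ^ 2 - 1296 * dd2 n = (256 * (3 * n ^ 2 + 4)) ^ 3 := by
  unfold dd1 dd2
  ring

lemma dd1_neg {n : ℝ} (hn : 15 ≤ n) : dd1 n < 0 := by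
  -- expanded around `n = 15`, the polynomial has nonnegative coefficients in `t = n - 15`
  obtain ⟨t, ht, rfl⟩ : ∃ t, 0 ≤ t ∧ n = 15 + t := ⟨n - 15, by linarith, by ring⟩
  rw [← neg_pos, dd1]
  ring_nf
  positivity

lemma dd2_nonneg {n : ℝ} (hn : 15 ≤ n) : 0 ≤ dd2 n := by
  obtain ⟨t, ht, rfl⟩ : ∃ t, 0 ≤ t ∧ n = 15 + t := ⟨n - 15, by linarith, by ring⟩
  rw [dd2]
  ring_nf
  positivity

lemma cardano_radicand_pos {n : ℝ} (hn : 15 ≤ n) : 0 < -(dd1 n + 36 * √(dd2 n)) := by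
  have hsqrt := sq_sqrt (dd2_nonneg hn)
  have hsq : (36 * √(dd2 n)) ^ 2 < (-dd1 n) ^ 2 := by
    nlinarith [dd1_sq_sub_dd2 n, (by positivity : (0 : ℝ) < (256 * (3 * n ^ 2 + 4)) ^ 3)]
  linarith [lt_of_pow_lt_pow_left₀ 2 (by linarith [dd1_neg hn]) hsq]

lemma dd0_pos {n : ℝ} (hn : 15 ≤ n) : 0 < dd0 n :=
  rpow_pos_of_pos (cardano_radicand_pos hn) _

lemma dd0_pow_three {n : ℝ} (hn : 15 ≤ n) : dd0 n ^ 3 = -(dd1 n + 36 * √(dd2 n)) := by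
  have h := rpow_inv_natCast_pow (cardano_radicand_pos hn).le three_ne_zero
  rwa [Nat.cast_ofNat, ← one_div] at h

def cardanoSum (n : ℝ) : ℝ := dd0 n + 256 * (3 * n ^ 2 + 4) / dd0 n

lemma cardanoSum_pos {n : ℝ} (hn : 15 ≤ n) : 0 < cardanoSum n := by
  have := dd0_pos hn
  unfold cardanoSum
  positivity

lemma cardanoSum_cube {n : ℝ} (hn : 15 ≤ n) :
    cardanoSum n ^ 3 - 3 * (256 * (3 * n ^ 2 + 4)) * cardanoSum n = -2 * dd1 n := by
  have hroot := cube_add_div_of_mul_eq_cube (dd0_pos hn).ne' (y := 36 * √(dd2 n) - dd1 n)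
    (K := 256 * (3 * n ^ 2 + 4)) (by
      rw [dd0_pow_three hn]
      linear_combination dd1_sq_sub_dd2 n - 1296 * sq_sqrt (dd2_nonneg hn))
  unfold cardanoSum
  rw [hroot, dd0_pow_three hn]
  ring

lemma abs_cardanoSum_sub_le {n : ℝ} (hn : 15 ≤ n) :
    |cardanoSum n - (6 * n ^ 2 - 24 * n + 88)| ≤ 3072 / n := by
  have hgap : 18 * (n * ((n - 1) * (n - 2) ^ 2))
      ≤ (6 * n ^ 2 - 24 * n + 88) ^ 2 - 3 * (256 * (3 * n ^ 2 + 4)) := by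
    obtain ⟨t, ht, rfl⟩ : ∃ t, 0 ≤ t ∧ n = 15 + t := ⟨n - 15, by linarith, by ring⟩
    rw [← sub_nonneg]
    ring_nf
    positivity
  have hpos : 0 < n * ((n - 1) * (n - 2) ^ 2) := by
    have : 0 < n - 2 := by linarith
    have : 0 < n - 1 := by linarith
    positivity
  have hroot := abs_sub_le_of_depressed_cubic (K := 256 * (3 * n ^ 2 + 4)) (cardanoSum_pos hn).le
    (by nlinarith : (0 : ℝ) ≤ 6 * n ^ 2 - 24 * n + 88) (by linarith)
  have hdefect : -2 * dd1 n - ((6 * n ^ 2 - 24 * n + 88) ^ 3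
      - 3 * (256 * (3 * n ^ 2 + 4)) * (6 * n ^ 2 - 24 * n + 88))
      = 55296 * ((n - 1) * (n - 2) ^ 2) := by
    unfold dd1
    ring
  rw [cardanoSum_cube hn, hdefect] at hroot
  refine hroot.trans ?_
  rw [abs_of_pos (by nlinarith), div_le_div_iff₀ (by linarith) (by linarith)]
  nlinarith

lemma tendsto_cardanoSum_sub :
    Tendsto (fun n => cardanoSum n - (6 * n ^ 2 - 24 * n + 88)) atTop (𝓝 0) :=
  squeeze_zero_norm'
    (by filter_upwards [eventually_ge_atTop 15] with n hn using abs_cardanoSum_sub_le hn)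
    (tendsto_const_nhds.div_atTop tendsto_id)

lemma dfn_eq_sqrt (n : ℝ) : dfn n = √((9 * n ^ 2 + 96 - 3 / 2 * cardanoSum n) / 36) := by
  rw [dfn, cardanoSum, sqrt_div' _ (by norm_num : (0 : ℝ) ≤ 36),
    show (36 : ℝ) = 6 ^ 2 by norm_num, sqrt_sq (by norm_num)]
  ring_nf

/-- **Lemma 8.2.** Asymptotics of `d(n)` as `n → +∞`:
`d(n)/√n → 1`, `d(n) - √n → 0` and `√n·(d(n) - √n) → -1/2`. -/
theorem dfn_asymptotics :
    Tendsto (fun n : ℝ => dfn n / Real.sqrt n) atTop (nhds 1) ∧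
    Tendsto (fun n : ℝ => dfn n - Real.sqrt n) atTop (nhds 0) ∧
    Tendsto (fun n : ℝ => Real.sqrt n * (dfn n - Real.sqrt n)) atTop (nhds (-(1 / 2))) := by
  have hsq : Tendsto (fun n => (9 * n ^ 2 + 96 - 3 / 2 * cardanoSum n) / 36 - n)
      atTop (𝓝 (-1)) := by
    have h := (tendsto_cardanoSum_sub.const_mul (-1 / 24)).add_const (-1)
    rw [mul_zero, zero_add] at h
    exact h.congr fun n => by ring
  simp only [dfn_eq_sqrt]
  refine ⟨tendsto_sqrt_div_sqrt_of_tendsto_sub_self hsq,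
    tendsto_sqrt_sub_sqrt_of_tendsto_sub_self hsq, ?_⟩
  convert tendsto_sqrt_mul_sqrt_sub_sqrt_of_tendsto_sub_self hsq using 2
  norm_num
end
end

section
/- For every real number n ≥ 15, one has d(n) < √n. -/
open MeasureTheory Filter

noncomputable section

lemma cuberoot_cube {x : ℝ} (hx : 0 ≤ x) : (x ^ ((1:ℝ)/3)) ^ (3:ℕ) = x := by
  rw [← Real.rpow_natCast (x ^ ((1:ℝ)/3)) 3, ← Real.rpow_mul hx]
  norm_num

lemma cube_cuberoot {x : ℝ} (hx : 0 ≤ x) : ((x ^ (3:ℕ) : ℝ)) ^ ((1:ℝ)/3) = x := by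
  rw [← Real.rpow_natCast x 3, ← Real.rpow_mul hx]
  norm_num

set_option maxHeartbeats 1600000 in
/-- **Lemma 8.3.** For every real `n ≥ 15`, `d(n) < √n`. -/
theorem dfn_lt_sqrt (n : ℝ) (hn : 15 ≤ n) : dfn n < Real.sqrt n := by
  have ht : (0:ℝ) ≤ n - 15 := by linarith
  have ht2 : (0:ℝ) ≤ (n-15)^2 := by positivity
  have ht3 : (0:ℝ) ≤ (n-15)^3 := by positivity
  have ht4 : (0:ℝ) ≤ (n-15)^4 := by positivity
  have ht5 : (0:ℝ) ≤ (n-15)^5 := by positivity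
  have ht6 : (0:ℝ) ≤ (n-15)^6 := by positivity
  have ht7 : (0:ℝ) ≤ (n-15)^7 := by positivity
  have ht8 : (0:ℝ) ≤ (n-15)^8 := by positivity
  have ht9 : (0:ℝ) ≤ (n-15)^9 := by positivity
  have ht10 : (0:ℝ) ≤ (n-15)^10 := by positivity
  have ht11 : (0:ℝ) ≤ (n-15)^11 := by positivity
  have ht12 : (0:ℝ) ≤ (n-15)^12 := by positivity
  -- positivity of dd2
  have h2 : 0 < dd2 n := by
    have hexp : dd2 n = 126100750123257 + 130684714202588*(n-15) + 60426347513634*(n-15)^2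
        + 16630573432844*(n-15)^3 + 3048957353415*(n-15)^4 + 393377921336*(n-15)^5
        + 36687653148*(n-15)^6 + 2494830456*(n-15)^7 + 122860311*(n-15)^8
        + 4275180*(n-15)^9 + 99810*(n-15)^10 + 1404*(n-15)^11 + 9*(n-15)^12 := by
      simp only [dd2]; ring
    linarith
  have hd1 : dd1 n < 0 := by
    have hexp : -dd1 n = 410705036 + 208733544*(n-15) + 42718356*(n-15)^2 + 4565808*(n-15)^3
        + 270324*(n-15)^4 + 8424*(n-15)^5 + 108*(n-15)^6 := by
      simp only [dd1]; ring
    nlinarith [hexp]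
  set s := Real.sqrt (dd2 n) with hs_def
  have hs0 : 0 ≤ s := Real.sqrt_nonneg _
  have hs2 : s ^ 2 = dd2 n := Real.sq_sqrt h2.le
  set u : ℝ := -(dd1 n + 36 * s) with hu_def
  set v : ℝ := -dd1 n + 36 * s with hv_def
  have hv : 0 < v := by rw [hv_def]; linarith
  have hK : (0:ℝ) < 768*n^2 + 1024 := by positivity
  have huv : u * v = (768*n^2 + 1024)^3 := by
    rw [hu_def, hv_def]
    simp only [dd1, dd2]
    simp only [dd2] at hs2
    linear_combination (-1296:ℝ) * hs2
  have hu : 0 < u := by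
    by_contra h
    push_neg at h
    have : u * v ≤ 0 := mul_nonpos_of_nonpos_of_nonneg h hv.le
    nlinarith [hK]
  have hd0_eq : dd0 n = u ^ ((1:ℝ)/3) := by rw [dd0, hu_def]
  set e : ℝ := v ^ ((1:ℝ)/3) with he_def
  have hd0pos : 0 < dd0 n := by
    rw [hd0_eq]; exact Real.rpow_pos_of_pos hu _
  have hepos : 0 < e := Real.rpow_pos_of_pos hv _
  have hcu : (dd0 n) ^ (3:ℕ) = u := by rw [hd0_eq]; exact cuberoot_cube hu.le
  have hcv : e ^ (3:ℕ) = v := cuberoot_cube hv.le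
  -- product of cube roots
  have hde : dd0 n * e = 768*n^2 + 1024 := by
    have h3 : (dd0 n * e) ^ (3:ℕ) = (768*n^2 + 1024) ^ (3:ℕ) := by
      rw [mul_pow, hcu, hcv, huv]
    calc dd0 n * e = ((dd0 n * e) ^ (3:ℕ)) ^ ((1:ℝ)/3) :=
          (cube_cuberoot (by positivity)).symm
      _ = ((768*n^2 + 1024) ^ (3:ℕ)) ^ ((1:ℝ)/3) := by rw [h3]
      _ = 768*n^2 + 1024 := cube_cuberoot hK.le
  set w : ℝ := dd0 n + e with hw_def
  have hwpos : 0 < w := by positivity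
  have hw2 : 4*(768*n^2 + 1024) ≤ w^2 := by
    nlinarith [sq_nonneg (dd0 n - e), hde]
  have hw3 : w^3 = 3*(768*n^2 + 1024)*w - 2*dd1 n := by
    rw [hw_def]
    linear_combination hcu + hcv + (3*(dd0 n + e))*hde
  set m : ℝ := 6*n^2 - 24*n + 64 with hm_def
  have hmpos : 0 < m := by rw [hm_def]; nlinarith [sq_nonneg (n-2)]
  have hgm : m^3 - 3*(768*n^2 + 1024)*m + 2*dd1 n < 0 := by
    have hexp : m^3 - 3*(768*n^2 + 1024)*m + 2*dd1 n
        = -(2592*(n-15)^4 + 190080*(n-15)^3 + 4829760*(n-15)^2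
            + 51760512*(n-15) + 200136096) := by
      rw [hm_def]; simp only [dd1]; ring
    rw [hexp]; nlinarith
  -- key inequality : m < w
  have hkey : m < w := by
    by_contra h
    push_neg at h
    have hfac2 : 0 ≤ m^2 + m*w + w^2 - 3*(768*n^2 + 1024) := by
      nlinarith [mul_nonneg hmpos.le hwpos.le, sq_nonneg m]
    have hfac : 0 ≤ (m - w) * (m^2 + m*w + w^2 - 3*(768*n^2 + 1024)) :=
      mul_nonneg (by linarith) hfac2
    have hid : (m - w) * (m^2 + m*w + w^2 - 3*(768*n^2 + 1024))
        = (m^3 - 3*(768*n^2 + 1024)*m + 2*dd1 n)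
          - (w^3 - 3*(768*n^2 + 1024)*w + 2*dd1 n) := by ring
    have hzero : w^3 - 3*(768*n^2 + 1024)*w + 2*dd1 n = 0 := by linarith [hw3]
    rw [hid, hzero] at hfac
    linarith
  -- translate into the quantity appearing in dfn
  have h1 : (1536 + 1152*n^2) / dd0 n = (3/2)*e := by
    rw [div_eq_iff hd0pos.ne']
    linear_combination (-3/2:ℝ) * hde
  have hXgt : 9*n^2 - 36*n + 96 < (1536 + 1152*n^2) / dd0 n + (3/2) * dd0 n := by
    rw [h1]
    rw [hm_def] at hkey
    linarith [hkey]
  have hn0 : (0:ℝ) < n := by linarith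
  have hsn : 0 < Real.sqrt n := Real.sqrt_pos.mpr hn0
  show (1/6) * Real.sqrt (9*n^2 + 96 - (1536 + 1152*n^2) / dd0 n - (3/2) * dd0 n)
      < Real.sqrt n
  set A : ℝ := 9*n^2 + 96 - (1536 + 1152*n^2) / dd0 n - (3/2) * dd0 n with hA_def
  have hA36 : A < 36*n := by rw [hA_def]; linarith
  have h36 : Real.sqrt (36*n) = 6 * Real.sqrt n := by
    rw [show (36:ℝ)*n = 6^2*n by norm_num, Real.sqrt_mul (by positivity),
      Real.sqrt_sq (by norm_num)]
  rcases le_or_gt A 0 with hle | hpos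
  · have hz : Real.sqrt A = 0 := Real.sqrt_eq_zero'.mpr hle
    rw [hz]
    simpa using hsn
  · have := Real.sqrt_lt_sqrt hpos.le hA36
    rw [h36] at this
    linarith
end
end

section
/- Let n ≥ 36 be a real number and let k be a real number with (n−8)/2 − √n < k < (n−8)/2 + √n. Then c₁(k,n) > 0, where c₁(k,n) = 3k⁵ + (54 − 6n)k⁴ + (3n² − 84n + 372)k³ + (30n² − 408n + 1224)k² + (−(3/16)n⁴ + (3/2)n³ + (159/2)n² − 810n + 1917)k + 48n² − 480n + 1152. -/
set_option maxHeartbeats 1000000 in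
/-- **Lemma 8.4.** For real `n ≥ 36` and `(n-8)/2 - √n < k < (n-8)/2 + √n`, one has
`c₁(k,n) > 0`. -/
theorem c1_pos (n k : ℝ) (hn : 36 ≤ n)
    (hk1 : (n - 8) / 2 - Real.sqrt n < k) (hk2 : k < (n - 8) / 2 + Real.sqrt n) :
    0 < 3*k^5 + (54 - 6*n)*k^4 + (3*n^2 - 84*n + 372)*k^3 + (30*n^2 - 408*n + 1224)*k^2
        + (-(3/16)*n^4 + (3/2)*n^3 + (159/2)*n^2 - 810*n + 1917)*k
        + 48*n^2 - 480*n + 1152 := by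
  set t := k - (n - 8) / 2 with ht
  have hn0 : (0:ℝ) ≤ n := by linarith
  have h36 : (0:ℝ) ≤ n - 36 := by linarith
  have hs : Real.sqrt n ^ 2 = n := Real.sq_sqrt hn0
  have h1 : -Real.sqrt n < t := by simp only [ht]; linarith
  have h2 : t < Real.sqrt n := by simp only [ht]; linarith
  have ht2 : t^2 < n := by nlinarith [Real.sqrt_nonneg n]
  have hu : (0:ℝ) ≤ n - t^2 := le_of_lt (sub_pos.2 ht2)
  have p1 : (0:ℝ) ≤ (n - 36) * n := mul_nonneg h36 hn0
  have p2 : (0:ℝ) ≤ (n - 36) * (n*n) := mul_nonneg h36 (mul_nonneg hn0 hn0)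
  have p3 : (0:ℝ) ≤ (n - 36) * (n*n*n) := mul_nonneg h36 (mul_nonneg (mul_nonneg hn0 hn0) hn0)
  -- inner bound
  have hin : (0:ℝ) ≤ 3/2*n^2 + 12 - 3*n - 3*t^2 := by nlinarith [p1]
  -- O > 0
  have hO : 0 < 3*t^4 - (3/2*n^2+12)*t^2 + (3/2*n^3 - 3/2*n^2 - 18*n - 3) := by
    nlinarith [mul_nonneg hu hin, p2, p1]
  -- H < 0
  have hHn : -3*t^4 + (3/2*n^2+15*n-168)*t^2 - 9*n^3 + 213/2*n^2 - 78*n + 723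
      ≤ -(15/2)*n^3 + 237/2*n^2 - 246*n + 723 := by
    nlinarith [mul_nonneg hu (show (0:ℝ) ≤ 3/2*n^2 + 15*n - 168 - 3*t^2 - 3*n by nlinarith [p1])]
  have hH : -3*t^4 + (3/2*n^2+15*n-168)*t^2 - 9*n^3 + 213/2*n^2 - 78*n + 723 < 0 := by
    nlinarith [p2, p1]
  -- G(n,n) > 0
  have hGnn : 0 < (9/2)*n^4 - (129/2)*n^3 + 12*n^2 + 2217*n + 252 := by
    nlinarith [p3, p2, p1]
  -- G > 0
  have hG : 0 < -3*t^6 + (3/2*n^2+18*n-168)*t^4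
      + (-(21/2)*n^3 + 183/2*n^2 + 90*n + 723)*t^2
      + 27/2*n^4 - 171*n^3 + 90*n^2 + 1494*n + 252 := by
    nlinarith [mul_nonneg hu (le_of_lt (neg_pos.2 hH)), hGnn]
  -- AM-GM
  have hAM : (0:ℝ) ≤ 12*t + t^2 + 36 := by nlinarith [sq_nonneg (t+6)]
  have key : (0:ℝ) ≤ (12*t + t^2 + 36) *
      (3*t^4 - (3/2*n^2+12)*t^2 + (3/2*n^3 - 3/2*n^2 - 18*n - 3)) :=
    mul_nonneg hAM hO.le
  have hk : k = (n - 8) / 2 + t := by ring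
  rw [hk]
  nlinarith [hG, key]
end

section
/- Let n ≥ 12 be a real number and let k be a real number with (n−8)/2 − √n < k < (n−8)/2 + √n. Then c₂(k,n) > 0, where c₂(k,n) = −3k³ + (3n − 36)k² + (27n − 135 − (3/4)n²)k + 36n − 192. -/
/-- **Lemma 8.5.** For real `n ≥ 12` and `(n-8)/2 - √n < k < (n-8)/2 + √n`, one has
`c₂(k,n) > 0`. -/
theorem c2_pos (n k : ℝ) (hn : 12 ≤ n)
    (hk1 : (n - 8) / 2 - Real.sqrt n < k) (hk2 : k < (n - 8) / 2 + Real.sqrt n) :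
    0 < -3*k^3 + (3*n - 36)*k^2 + (27*n - 135 - (3/4)*n^2)*k + 36*n - 192 := by
  set s := Real.sqrt n with hsdef
  have hs2 : s ^ 2 = n := Real.sq_sqrt (by linarith)
  have hs3 : 3 ≤ s := by
    have h9 : (3:ℝ) = Real.sqrt 9 := by
      rw [show (9:ℝ) = 3^2 by norm_num, Real.sqrt_sq]; norm_num
    rw [h9, hsdef]; exact Real.sqrt_le_sqrt (by linarith)
  have hspos : (0:ℝ) < s := by linarith
  set t := k - (n - 8) / 2 with htdef
  have hA : 0 < t + s := by simp only [htdef]; linarith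
  have hB : 0 < s - t := by simp only [htdef]; linarith
  have hg : 0 < -3*t^2 + (3*s - (3/2)*n)*t + (3/2)*n*s + 9 := by
    have h1 : 0 < 3*n*s - 6*n + 9 := by nlinarith
    have h2 : 0 < (s - t) * (3*n*s - 6*n + 9) := mul_pos hB h1
    have h3 : 0 < 9 * (s + t) := by linarith
    have h4 : 0 < 6 * (s * ((s - t) * (t + s))) :=
      by positivity
    have hid : 2 * s * (-3*t^2 + (3*s - (3/2)*n)*t + (3/2)*n*s + 9)
        = (s - t) * (3*n*s - 6*n + 9) + 9 * (s + t) + 6 * (s * ((s - t) * (t + s))) := by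
      linear_combination (6*t - 6*s) * hs2
    have h6 : 0 < 2 * s * (-3*t^2 + (3*s - (3/2)*n)*t + (3/2)*n*s + 9) := by
      rw [hid]; linarith
    by_contra hcon
    push_neg at hcon
    nlinarith [mul_nonpos_of_nonneg_of_nonpos (by linarith : (0:ℝ) ≤ 2*s) hcon]
  have hM : 0 < 3*n^2 - (39/2)*n - 36 - 9*s := by
    have hsn : s ≤ n / 3 := by nlinarith
    nlinarith
  have key : -3*k^3 + (3*n - 36)*k^2 + (27*n - 135 - (3/4)*n^2)*k + 36*n - 192
      = (t + s) * (-3*t^2 + (3*s - (3/2)*n)*t + (3/2)*n*s + 9)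
        + (3*n^2 - (39/2)*n - 36 - 9*s) := by
    simp only [htdef]
    linear_combination (-(3*(k - (n-8)/2)) - (3/2)*n) * hs2
  rw [key]
  exact add_pos (mul_pos hA hg) hM
end
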